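/- arXiv:2101.05690 — 7 statements merged into one kernel-verified Lean document; each statement's English description precedes it below -/
import Mathlib

section
/- Let d ≥ 1 and let Ξ be a finite index set with block dimensions m : Ξ → ℕ. Let ρ be a d×d complex density matrix (positive semidefinite with trace 1), for each ξ ∈ Ξ let γ_ξ be an (m ξ)×(m ξ) density matrix and U_ξ a unitary matrix of size d·(m ξ), and let p : Ξ → ℝ satisfy p ξ ≥ 0 and Σ_ξ p ξ = 1. Define the bath state γ_R as the block-diagonal matrix (indexed by pairs (ξ, r) with r ∈ Fin (m ξ)) whose ξ-th block is (p ξ)·γ_ξ, and the global unitary U (indexed by pairs (s,(ξ,r)) with s ∈ Fin d) by U_{(s,(ξ,r)),(s',(ξ',r'))} = δ_{ξξ'} (U_ξ)_{(s,r),(s',r')}. Then the partial trace over the bath satisfies Tr_R[U (ρ ⊗ γ_R) U†] = Σ_{ξ∈Ξ} (p ξ) · Tr_{R_ξ}[U_ξ (ρ ⊗ γ_ξ) U_ξ†]. -/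
open Matrix Kronecker
open scoped ComplexOrder

/-- Partial trace over the second (bath) tensor factor. -/
noncomputable def ptrace {d : ℕ} {B : Type*} [Fintype B]
    (M : Matrix (Fin d × B) (Fin d × B) ℂ) : Matrix (Fin d) (Fin d) ℂ :=
  fun s s' => ∑ r : B, M (s, r) (s', r)

/-- **Lemma 1**: a thermal operation with a sector-decomposed bath is the
convex combination of the thermal operations on the individual sectors. -/
theorem thermal_operation_sector_decomposition
    (d : ℕ) (hd : 1 ≤ d) (Ξ : Type*) [Fintype Ξ] [DecidableEq Ξ] (m : Ξ → ℕ)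
    (ρ : Matrix (Fin d) (Fin d) ℂ) (hρ : ρ.PosSemidef) (hρtr : ρ.trace = 1)
    (γ : ∀ ξ : Ξ, Matrix (Fin (m ξ)) (Fin (m ξ)) ℂ)
    (hγ : ∀ ξ, (γ ξ).PosSemidef) (hγtr : ∀ ξ, (γ ξ).trace = 1)
    (Uξ : ∀ ξ : Ξ, Matrix (Fin d × Fin (m ξ)) (Fin d × Fin (m ξ)) ℂ)
    (hUξ : ∀ ξ, Uξ ξ ∈ Matrix.unitaryGroup (Fin d × Fin (m ξ)) ℂ)
    (p : Ξ → ℝ) (hp : ∀ ξ, 0 ≤ p ξ) (hpsum : ∑ ξ, p ξ = 1)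
    (γR : Matrix (Σ ξ : Ξ, Fin (m ξ)) (Σ ξ : Ξ, Fin (m ξ)) ℂ)
    (hγR : ∀ (ξ ξ' : Ξ) (r : Fin (m ξ)) (r' : Fin (m ξ')),
      γR ⟨ξ, r⟩ ⟨ξ', r'⟩ =
        if h : ξ' = ξ then (p ξ : ℂ) * γ ξ r (h ▸ r') else 0)
    (U : Matrix (Fin d × Σ ξ : Ξ, Fin (m ξ)) (Fin d × Σ ξ : Ξ, Fin (m ξ)) ℂ)
    (hU : ∀ (s s' : Fin d) (ξ ξ' : Ξ) (r : Fin (m ξ)) (r' : Fin (m ξ')),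
      U (s, ⟨ξ, r⟩) (s', ⟨ξ', r'⟩) =
        if h : ξ' = ξ then Uξ ξ (s, r) (s', h ▸ r') else 0) :
    ptrace (U * (ρ ⊗ₖ γR) * Uᴴ) =
      ∑ ξ : Ξ, (p ξ : ℂ) • ptrace (Uξ ξ * (ρ ⊗ₖ γ ξ) * (Uξ ξ)ᴴ) := by

  have h1 : ∀ (s : Fin d) (ξ : Ξ) (r : Fin (m ξ)) (c : Fin d) (e : Fin (m ξ)),
      (U * (ρ ⊗ₖ γR)) (s, ⟨ξ, r⟩) (c, ⟨ξ, e⟩)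
        = (p ξ : ℂ) * (Uξ ξ * (ρ ⊗ₖ γ ξ)) (s, r) (c, e) := by
    intro s ξ r c e
    rw [Matrix.mul_apply, Matrix.mul_apply, Fintype.sum_prod_type,
      Fintype.sum_prod_type, Finset.mul_sum]
    refine Finset.sum_congr rfl fun a _ => ?_
    rw [← Finset.univ_sigma_univ, Finset.sum_sigma, Finset.mul_sum]
    rw [Finset.sum_eq_single_of_mem ξ (Finset.mem_univ ξ)
      (fun α _ hα => Finset.sum_eq_zero fun b _ => by
        rw [hU s a ξ α r b, dif_neg hα, zero_mul])]
    refine Finset.sum_congr rfl fun b _ => ?_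
    rw [hU s a ξ ξ r b, dif_pos rfl, kroneckerMap_apply, kroneckerMap_apply,
      hγR ξ ξ b e, dif_pos rfl]
    ring
  have key : ∀ (s s' : Fin d) (ξ : Ξ) (r r' : Fin (m ξ)),
      (U * (ρ ⊗ₖ γR) * Uᴴ) (s, ⟨ξ, r⟩) (s', ⟨ξ, r'⟩)
        = (p ξ : ℂ) * (Uξ ξ * (ρ ⊗ₖ γ ξ) * (Uξ ξ)ᴴ) (s, r) (s', r') := by
    intro s s' ξ r r'
    rw [Matrix.mul_apply, Matrix.mul_apply, Fintype.sum_prod_type,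
      Fintype.sum_prod_type, Finset.mul_sum]
    refine Finset.sum_congr rfl fun c _ => ?_
    rw [← Finset.univ_sigma_univ, Finset.sum_sigma, Finset.mul_sum]
    rw [Finset.sum_eq_single_of_mem ξ (Finset.mem_univ ξ)
      (fun β _ hβ => Finset.sum_eq_zero fun e _ => by
        rw [conjTranspose_apply, hU s' c ξ β r' e, dif_neg hβ, star_zero, mul_zero])]
    refine Finset.sum_congr rfl fun e _ => ?_
    rw [h1 s ξ r c e, conjTranspose_apply, conjTranspose_apply,
      hU s' c ξ ξ r' e, dif_pos rfl]
    ring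
  funext s s'
  simp only [ptrace, Matrix.sum_apply, Matrix.smul_apply, smul_eq_mul,
    Finset.mul_sum]
  rw [← Finset.univ_sigma_univ, Finset.sum_sigma]
  exact Finset.sum_congr rfl fun ξ _ => Finset.sum_congr rfl fun r _ => key s s' ξ r r
end

section
/- Let q ∈ (0,1), γ = (1, q, q²)ᵀ, and let G be a Gibbs-stochastic 3×3 real matrix. Let p₀, p₁ ∈ ℝ be the first two components of the vector G·(1/2, 1/2, 0)ᵀ. Then G₀₀ ≤ min{2p₀, 1, (1 − 2qp₀)/(1 − q)} and G₁₁ ≤ min{2p₁, 1, (2p₁ − q + q²)/(1 − q)}. -/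
open Matrix

/-- A 3×3 real matrix is Gibbs-stochastic (w.r.t. the Gibbs vector
`γ = (1, q, q²)`) if its entries lie in `[0,1]`, its columns sum to 1,
and it fixes `γ`. -/
def IsGibbsStochastic (q : ℝ) (G : Matrix (Fin 3) (Fin 3) ℝ) : Prop :=
  (∀ i j, G i j ∈ Set.Icc (0 : ℝ) 1) ∧ (∀ j, ∑ i, G i j = 1) ∧
    G.mulVec ![1, q, q ^ 2] = ![1, q, q ^ 2]

/-- Upper bounds on the diagonal entries `G₀₀` and `G₁₁` of a Gibbs-stochastic
matrix in terms of the output populations `p₀` and `p₁`. -/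
theorem diagonal_entries_upper_bounds
    (q : ℝ) (hq : q ∈ Set.Ioo (0 : ℝ) 1)
    (G : Matrix (Fin 3) (Fin 3) ℝ) (hG : IsGibbsStochastic q G)
    (p₀ p₁ : ℝ)
    (hp₀ : p₀ = G.mulVec ![1 / 2, 1 / 2, 0] 0)
    (hp₁ : p₁ = G.mulVec ![1 / 2, 1 / 2, 0] 1) :
    G 0 0 ≤ min (2 * p₀) (min 1 ((1 - 2 * q * p₀) / (1 - q))) ∧
    G 1 1 ≤ min (2 * p₁) (min 1 ((2 * p₁ - q + q ^ 2) / (1 - q))) := by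
  obtain ⟨hq0, hq1⟩ := hq
  obtain ⟨hent, hcol, hfix⟩ := hG
  have h0 := congrFun hfix 0
  have h1 := congrFun hfix 1
  simp [mulVec, dotProduct, Fin.sum_univ_three] at h0 h1
  simp [mulVec, dotProduct, Fin.sum_univ_three] at hp₀ hp₁
  have e00 := hent 0 0
  have e01 := hent 0 1
  have e02 := hent 0 2
  have e10 := hent 1 0
  have e11 := hent 1 1
  have e12 := hent 1 2
  simp [Set.mem_Icc] at e00 e01 e02 e10 e11 e12
  have h1q : (0:ℝ) < 1 - q := by linarith
  refine ⟨le_min (by linarith) (le_min e00.2 ?_), le_min (by linarith) (le_min e11.2 ?_)⟩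
  · rw [le_div_iff₀ h1q]; nlinarith [e02.1, mul_nonneg (by positivity : (0:ℝ) ≤ q^2) e02.1]
  · rw [le_div_iff₀ h1q]; nlinarith [e12.2, mul_pos hq0 hq0]
end

section
/- Let q ∈ (0,1), γ = (1, q, q²)ᵀ, and let G be a Gibbs-stochastic 3×3 real matrix. Let p₀, p₁ ∈ ℝ be the first two components of the vector G·(1/2, 1/2, 0)ᵀ. Then max{−2p₁, 2p₀ − 1, (1 − 2(qp₀ + p₁))/(1 − q) + q} ≤ G₀₀ − G₁₁ ≤ min{1 − 2p₁, 2p₀, (1 + q − 2(qp₀ + p₁))/(1 − q)}. -/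
open Matrix

set_option maxHeartbeats 1000000 in
/-- Bounds on the difference `G₀₀ − G₁₁` for a Gibbs-stochastic matrix in terms
of the output populations `p₀` and `p₁`. -/
theorem diagonal_difference_bounds
    (q : ℝ) (hq : q ∈ Set.Ioo (0 : ℝ) 1)
    (G : Matrix (Fin 3) (Fin 3) ℝ) (hG : IsGibbsStochastic q G)
    (p₀ p₁ : ℝ)
    (hp₀ : p₀ = G.mulVec ![1 / 2, 1 / 2, 0] 0)
    (hp₁ : p₁ = G.mulVec ![1 / 2, 1 / 2, 0] 1) :
    max (-(2 * p₁)) (max (2 * p₀ - 1) ((1 - 2 * (q * p₀ + p₁)) / (1 - q) + q))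
      ≤ G 0 0 - G 1 1 ∧
    G 0 0 - G 1 1
      ≤ min (1 - 2 * p₁) (min (2 * p₀) ((1 + q - 2 * (q * p₀ + p₁)) / (1 - q))) := by
  obtain ⟨hq0, hq1⟩ := hq
  obtain ⟨hent, hcol, hfix⟩ := hG
  have h1q : (0:ℝ) < 1 - q := by linarith
  have e0 := hent 0 0; have e1 := hent 0 1; have e2 := hent 0 2
  have e3 := hent 1 0; have e4 := hent 1 1; have e5 := hent 1 2
  have e6 := hent 2 0; have e7 := hent 2 1; have e8 := hent 2 2
  simp only [Set.mem_Icc] at e0 e1 e2 e3 e4 e5 e6 e7 e8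
  have c0 := hcol 0; have c1 := hcol 1; have c2 := hcol 2
  simp only [Fin.sum_univ_three] at c0 c1 c2
  have r0 := congrFun hfix 0
  have r1 := congrFun hfix 1
  simp only [mulVec, dotProduct, Fin.sum_univ_three, Matrix.cons_val_zero,
    Matrix.cons_val_one, Matrix.head_cons, Matrix.cons_val_two, Matrix.tail_cons] at r0 r1
  simp only [mulVec, dotProduct, Fin.sum_univ_three, Matrix.cons_val_zero,
    Matrix.cons_val_one, Matrix.head_cons, Matrix.cons_val_two, Matrix.tail_cons] at hp₀ hp₁
  set a := G 0 0 with ha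
  set b := G 0 1 with hb
  set c := G 0 2 with hc
  set d := G 1 0 with hd
  set e := G 1 1 with he
  set f := G 1 2 with hf
  set g := G 2 0 with hg2
  set h := G 2 1 with hh
  set i := G 2 2 with hi
  constructor
  · apply max_le
    · nlinarith [e0.1, e3.1]
    · apply max_le
      · nlinarith [e6.1]
      · rw [← le_sub_iff_add_le, div_le_iff₀ h1q]
        subst hp₀ hp₁
        have key : G 0 0 + q * G 0 1 + G 1 0 + q * G 1 1
            = 1 + q - q ^ 2 * (G 0 2 + G 1 2) := by linear_combination r0 + r1
        have hle : q ^ 2 * (G 0 2 + G 1 2) ≤ q ^ 2 := by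
          nlinarith [e8.1, sq_nonneg q]
        ring_nf at key hle ⊢
        linarith [key, hle]
  · apply le_min
    · nlinarith [e0.2, e3.1]
    · apply le_min
      · nlinarith [e1.1, e4.1]
      · rw [le_div_iff₀ h1q]
        subst hp₀ hp₁
        have key : G 0 0 + q * G 0 1 + G 1 0 + q * G 1 1
            = 1 + q - q ^ 2 * (G 0 2 + G 1 2) := by linear_combination r0 + r1
        have hge : 0 ≤ q ^ 2 * (G 0 2 + G 1 2) := by nlinarith [e2.1, e5.1, sq_nonneg q]
        ring_nf at key hge ⊢
        linarith [key, hge]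
end

section
/- Let q ∈ (0,1), γ = (1, q, q²)ᵀ, and G^(b) = [[1−q², 0, 1], [0, 1, 0], [q², 0, 0]]. Suppose Ξ is a finite index set, p : Ξ → ℝ satisfies p ξ > 0 for all ξ and Σ_ξ p ξ = 1, and for each ξ ∈ Ξ, G_ξ is a Gibbs-stochastic 3×3 real matrix. If G^(b) = Σ_{ξ∈Ξ} (p ξ)·G_ξ, then G_ξ = G^(b) for every ξ ∈ Ξ. -/
open Matrix

/-!
An entry of `G⁽ᵇ⁾` equal to `0` or `1` sits at an endpoint of `[0,1]`, so in a convex combination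
with positive weights every summand must have the same entry there. This pins down all entries of
each `G_ξ` except `(0,0)` and `(2,0)`, and those two are then forced by the third row of `Gγ = γ`
and the sum of the first column.
-/

section ConvexCombination

variable {𝕜 Ξ : Type*} [Field 𝕜] [LinearOrder 𝕜] [IsStrictOrderedRing 𝕜] [Fintype Ξ]
  {p x : Ξ → 𝕜}

theorem eq_zero_of_sum_mul_eq_zero (hp : ∀ ξ, 0 < p ξ) (hx : ∀ ξ, 0 ≤ x ξ)
    (h : ∑ ξ, p ξ * x ξ = 0) (ξ : Ξ) : x ξ = 0 := by
  have hnonneg : ∀ ξ ∈ Finset.univ, 0 ≤ p ξ * x ξ := fun ξ _ => mul_nonneg (hp ξ).le (hx ξ)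
  have := (Finset.sum_eq_zero_iff_of_nonneg hnonneg).mp h ξ (Finset.mem_univ ξ)
  exact (mul_eq_zero.mp this).resolve_left (hp ξ).ne'

theorem eq_one_of_sum_mul_eq_one (hp : ∀ ξ, 0 < p ξ) (hpsum : ∑ ξ, p ξ = 1)
    (hx : ∀ ξ, x ξ ≤ 1) (h : ∑ ξ, p ξ * x ξ = 1) (ξ : Ξ) : x ξ = 1 := by
  have hcompl : ∑ ξ, p ξ * (1 - x ξ) = 0 := by
    simp only [mul_one_sub, Finset.sum_sub_distrib, hpsum, h, sub_self]
  have := eq_zero_of_sum_mul_eq_zero hp (fun ξ => sub_nonneg.mpr (hx ξ)) hcompl ξ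
  linarith

theorem Matrix.apply_eq_of_eq_sum_smul {m n : Type*} {G : Ξ → Matrix m n 𝕜} {B : Matrix m n 𝕜}
    (hp : ∀ ξ, 0 < p ξ) (hpsum : ∑ ξ, p ξ = 1) (hG : ∀ ξ i j, G ξ i j ∈ Set.Icc 0 1)
    (hB : B = ∑ ξ, p ξ • G ξ) {i : m} {j : n} (hBij : B i j = 0 ∨ B i j = 1) (ξ : Ξ) :
    G ξ i j = B i j := by
  have hsum : ∑ ξ, p ξ * G ξ i j = B i j := by simp [hB, Matrix.sum_apply]
  rcases hBij with h | h
  · rw [h] at hsum ⊢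
    exact eq_zero_of_sum_mul_eq_zero hp (fun ξ => (hG ξ i j).1) hsum ξ
  · rw [h] at hsum ⊢
    exact eq_one_of_sum_mul_eq_one hp hpsum (fun ξ => (hG ξ i j).2) hsum ξ

end ConvexCombination

def transitionMatrixB (q : ℝ) : Matrix (Fin 3) (Fin 3) ℝ :=
  !![1 - q ^ 2, 0, 1; 0, 1, 0; q ^ 2, 0, 0]

theorem IsGibbsStochastic.eq_transitionMatrixB {q : ℝ} {G : Matrix (Fin 3) (Fin 3) ℝ}
    (hG : IsGibbsStochastic q G) (h01 : G 0 1 = 0) (h02 : G 0 2 = 1) (h10 : G 1 0 = 0)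
    (h11 : G 1 1 = 1) (h12 : G 1 2 = 0) (h21 : G 2 1 = 0) (h22 : G 2 2 = 0) :
    G = transitionMatrixB q := by
  have h20 : G 2 0 = q ^ 2 := by
    have := congrFun hG.2.2 2
    simpa [Matrix.mulVec, dotProduct, Fin.sum_univ_three, h21, h22] using this
  have h00 : G 0 0 = 1 - q ^ 2 := by
    have := hG.2.1 0
    rw [Fin.sum_univ_three, h10, h20] at this
    linarith
  ext i j
  fin_cases i <;> fin_cases j <;> simp [transitionMatrixB, *]

theorem transition_matrix_point_b_extreme_general
    (q : ℝ)
    (Ξ : Type*) [Fintype Ξ]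
    (p : Ξ → ℝ) (hp : ∀ ξ, 0 < p ξ) (hpsum : ∑ ξ, p ξ = 1)
    (Gξ : Ξ → Matrix (Fin 3) (Fin 3) ℝ)
    (hGξ : ∀ ξ, IsGibbsStochastic q (Gξ ξ))
    (hdecomp : !![1 - q ^ 2, 0, 1; 0, 1, 0; q ^ 2, 0, 0] = ∑ ξ, p ξ • Gξ ξ) :
    ∀ ξ, Gξ ξ = !![1 - q ^ 2, 0, 1; 0, 1, 0; q ^ 2, 0, 0] := by
  intro ξ
  have hentry {i j : Fin 3} (h : transitionMatrixB q i j = 0 ∨ transitionMatrixB q i j = 1) :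
      Gξ ξ i j = transitionMatrixB q i j :=
    Matrix.apply_eq_of_eq_sum_smul hp hpsum (fun ξ => (hGξ ξ).1) hdecomp h ξ
  refine (hGξ ξ).eq_transitionMatrixB ?_ ?_ ?_ ?_ ?_ ?_ ?_ <;>
    exact hentry (by simp [transitionMatrixB])

/-- The transition matrix `G⁽ᵇ⁾` is an extreme point of the set of
Gibbs-stochastic matrices: any convex decomposition of it into
Gibbs-stochastic matrices is trivial. -/
theorem transition_matrix_point_b_extreme
    (q : ℝ) (hq : q ∈ Set.Ioo (0 : ℝ) 1)
    (Ξ : Type*) [Fintype Ξ]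
    (p : Ξ → ℝ) (hp : ∀ ξ, 0 < p ξ) (hpsum : ∑ ξ, p ξ = 1)
    (Gξ : Ξ → Matrix (Fin 3) (Fin 3) ℝ)
    (hGξ : ∀ ξ, IsGibbsStochastic q (Gξ ξ))
    (hdecomp : !![1 - q ^ 2, 0, 1; 0, 1, 0; q ^ 2, 0, 0] = ∑ ξ, p ξ • Gξ ξ) :
    ∀ ξ, Gξ ξ = !![1 - q ^ 2, 0, 1; 0, 1, 0; q ^ 2, 0, 0] :=
  transition_matrix_point_b_extreme_general q Ξ p hp hpsum Gξ hGξ hdecomp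
end

section
/- Let G be a 3×3 real matrix with nonnegative entries whose columns each sum to 1, and for each integer n with −2 ≤ n ≤ 2 define the 3×3 complex matrix K_n by (K_n)_{ij} = √(G_{ij}) if i − j = n and 0 otherwise. Let ρ₀ = |ψ₀⟩⟨ψ₀| where ψ₀ = (1/√2)(e₀ + e₁) ∈ ℂ³, and let ρ = Σ_{n=−2}^{2} K_n ρ₀ K_n†. Then the diagonal of ρ equals G·(1/2, 1/2, 0)ᵀ, the (1,0) entry of ρ equals (1/2)√(G₀₀ G₁₁), the (2,1) entry of ρ equals (1/2)√(G₁₀ G₂₁), and the (2,0) entry of ρ equals 0. -/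
/-!
Conjugating the pure state `|ψ⟩⟨ψ|` by `K` gives the pure state `|Kψ⟩⟨Kψ|`, and
`(K_n ψ)_i = √(G i j) ψ_j` for the unique `j` with `i − j = n`. Summing over `n` therefore
pairs exactly the amplitudes with equal index shifts:
`ρ_{ik} = ∑_{i − j = k − l} √(G i j) √(G k l) ψ_j ψ̄_l`.
For `ψ = (e₀ + e₁)/√2` each surviving term carries the weight `1/2`: on the diagonal `j = l`
gives the populations, `ρ₁₀` and `ρ₂₁` each receive the single term `j = 1, l = 0`, and
`ρ₂₀` would need `j − l = 2`, impossible on the support `{0, 1}`.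
-/

open Matrix

/-- The Kraus operators built from a transition matrix `G`: `K n` is supported
on the `n`-th diagonal, with entries `√(G i j)` for `i − j = n`. -/
noncomputable def kraus (G : Matrix (Fin 3) (Fin 3) ℝ) (n : ℤ) :
    Matrix (Fin 3) (Fin 3) ℂ :=
  fun i j => if ((i : ℕ) : ℤ) - ((j : ℕ) : ℤ) = n then (Real.sqrt (G i j) : ℂ) else 0

theorem Matrix.mul_vecMulVec_star_mul_conjTranspose {m n α : Type*} [Fintype m] [Fintype n]
    [CommSemiring α] [StarRing α] (K : Matrix m n α) (ψ : n → α) :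
    K * vecMulVec ψ (star ψ) * Kᴴ = vecMulVec (K *ᵥ ψ) (star (K *ᵥ ψ)) := by
  rw [mul_vecMulVec, vecMulVec_mul, star_mulVec]

noncomputable def krausChannel (G : Matrix (Fin 3) (Fin 3) ℝ) (ρ : Matrix (Fin 3) (Fin 3) ℂ) :
    Matrix (Fin 3) (Fin 3) ℂ :=
  ∑ n ∈ Finset.Icc (-2 : ℤ) 2, kraus G n * ρ * (kraus G n)ᴴ

theorem kraus_mulVec_apply (G : Matrix (Fin 3) (Fin 3) ℝ) (n : ℤ) (ψ : Fin 3 → ℂ) (i : Fin 3) :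
    (kraus G n *ᵥ ψ) i = ∑ j : Fin 3,
      if ((i : ℕ) : ℤ) - ((j : ℕ) : ℤ) = n then (Real.sqrt (G i j) : ℂ) * ψ j else 0 := by
  simp only [mulVec, dotProduct, kraus, ite_mul, zero_mul]

theorem krausChannel_vecMulVec_apply (G : Matrix (Fin 3) (Fin 3) ℝ) (ψ : Fin 3 → ℂ)
    (i k : Fin 3) :
    krausChannel G (vecMulVec ψ (star ψ)) i k =
      ∑ j : Fin 3, ∑ l : Fin 3,
        if ((i : ℕ) : ℤ) - ((j : ℕ) : ℤ) = ((k : ℕ) : ℤ) - ((l : ℕ) : ℤ) then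
          (Real.sqrt (G i j) : ℂ) * Real.sqrt (G k l) * (ψ j * star (ψ l)) else 0 := by
  simp only [krausChannel, Matrix.sum_apply, mul_vecMulVec_star_mul_conjTranspose,
    vecMulVec_apply, Pi.star_apply, kraus_mulVec_apply, star_sum, Finset.sum_mul_sum]
  rw [Finset.sum_comm]
  refine Finset.sum_congr rfl fun j _ => ?_
  rw [Finset.sum_comm]
  refine Finset.sum_congr rfl fun l _ => ?_
  -- every index shift of a qutrit lies in `[-2, 2]`, so the sum over `n` keeps just `n = i - j`
  have hmem : ((i : ℕ) : ℤ) - ((j : ℕ) : ℤ) ∈ Finset.Icc (-2 : ℤ) 2 := by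
    simp only [Finset.mem_Icc]
    omega
  simp only [ite_mul, zero_mul, Finset.sum_ite_eq, if_pos hmem]
  by_cases h : ((i : ℕ) : ℤ) - ((j : ℕ) : ℤ) = ((k : ℕ) : ℤ) - ((l : ℕ) : ℤ)
  · rw [if_pos h.symm, if_pos h, star_mul', Complex.star_def, Complex.conj_ofReal]
    ring
  · rw [if_neg (Ne.symm h), if_neg h, star_zero, mul_zero]

theorem Complex.inv_ofReal_sqrt_two_mul_self :
    ((Real.sqrt 2 : ℝ) : ℂ)⁻¹ * ((Real.sqrt 2 : ℝ) : ℂ)⁻¹ = 2⁻¹ := by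
  rw [← mul_inv, ← Complex.ofReal_mul, Real.mul_self_sqrt zero_le_two, Complex.ofReal_ofNat]

theorem Complex.ofReal_sqrt_mul_self {a : ℝ} (ha : 0 ≤ a) :
    (Real.sqrt a : ℂ) * Real.sqrt a = a := by
  rw [← Complex.ofReal_mul, Real.mul_self_sqrt ha]

theorem kraus_channel_output_state_general
    (G : Matrix (Fin 3) (Fin 3) ℝ)
    (hGnn : ∀ i j, 0 ≤ G i j)
    (ρ₀ : Matrix (Fin 3) (Fin 3) ℂ)
    (hρ₀ : ρ₀ = Matrix.vecMulVec
      ![(1 / Real.sqrt 2 : ℂ), (1 / Real.sqrt 2 : ℂ), 0]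
      (star ![(1 / Real.sqrt 2 : ℂ), (1 / Real.sqrt 2 : ℂ), 0]))
    (ρ : Matrix (Fin 3) (Fin 3) ℂ)
    (hρ : ρ = ∑ n ∈ Finset.Icc (-2 : ℤ) 2, kraus G n * ρ₀ * (kraus G n)ᴴ) :
    (∀ i, ρ i i = ((G.mulVec ![1 / 2, 1 / 2, 0] i : ℝ) : ℂ)) ∧
    ρ 1 0 = ((Real.sqrt (G 0 0 * G 1 1) / 2 : ℝ) : ℂ) ∧
    ρ 2 1 = ((Real.sqrt (G 1 0 * G 2 1) / 2 : ℝ) : ℂ) ∧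
    ρ 2 0 = 0 := by
  change ρ = krausChannel G ρ₀ at hρ
  subst hρ₀ hρ
  simp only [krausChannel_vecMulVec_apply, Fin.sum_univ_three]
  refine ⟨fun i => ?_, ?_, ?_, ?_⟩
  · fin_cases i <;>
      simp [Complex.inv_ofReal_sqrt_two_mul_self, Complex.ofReal_sqrt_mul_self, hGnn, mulVec,
        dotProduct, Fin.sum_univ_three]
  · simp [Complex.inv_ofReal_sqrt_two_mul_self, Real.sqrt_mul (hGnn 0 0), div_eq_mul_inv, mul_comm]
  · simp [Complex.inv_ofReal_sqrt_two_mul_self, Real.sqrt_mul (hGnn 1 0), div_eq_mul_inv, mul_comm]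
  · simp

/-- The channel built from a column-stochastic matrix `G`, applied to the input
state `ρ₀ = |ψ₀⟩⟨ψ₀|` with `ψ₀ = (e₀ + e₁)/√2`, produces the output populations
`G·(1/2,1/2,0)ᵀ` and the output coherences `ρ₁₀ = (1/2)√(G₀₀G₁₁)`,
`ρ₂₁ = (1/2)√(G₁₀G₂₁)`, `ρ₂₀ = 0`. -/
theorem kraus_channel_output_state
    (G : Matrix (Fin 3) (Fin 3) ℝ)
    (hGnn : ∀ i j, 0 ≤ G i j) (hGcol : ∀ j, ∑ i, G i j = 1)
    (ρ₀ : Matrix (Fin 3) (Fin 3) ℂ)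
    (hρ₀ : ρ₀ = Matrix.vecMulVec
      ![(1 / Real.sqrt 2 : ℂ), (1 / Real.sqrt 2 : ℂ), 0]
      (star ![(1 / Real.sqrt 2 : ℂ), (1 / Real.sqrt 2 : ℂ), 0]))
    (ρ : Matrix (Fin 3) (Fin 3) ℂ)
    (hρ : ρ = ∑ n ∈ Finset.Icc (-2 : ℤ) 2, kraus G n * ρ₀ * (kraus G n)ᴴ) :
    (∀ i, ρ i i = ((G.mulVec ![1 / 2, 1 / 2, 0] i : ℝ) : ℂ)) ∧
    ρ 1 0 = ((Real.sqrt (G 0 0 * G 1 1) / 2 : ℝ) : ℂ) ∧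
    ρ 2 1 = ((Real.sqrt (G 1 0 * G 2 1) / 2 : ℝ) : ℂ) ∧
    ρ 2 0 = 0 :=
  kraus_channel_output_state_general G hGnn ρ₀ hρ₀ ρ hρ
end

section
/- Let q ∈ (0,1). There exists a finite family of 3×3 complex matrices (K_n)_{n=−2}^{2}, with ⟨i|K_n|j⟩ = 0 whenever i − j ≠ n, such that: (1) Σ_n K_n† K_n = I₃; (2) Σ_n K_n γ̂ K_n† = γ̂ where γ̂ = diag(1, q, q²)/(1+q+q²); and (3) Σ_n K_n ρ₀ K_n† = ρ, where ρ₀ = |ψ₀⟩⟨ψ₀| with ψ₀ = (1/√2)(e₀ + e₁) ∈ ℂ³ and ρ = (1/2)·[[1−q², √(1−q²), 0], [√(1−q²), 1, 0], [0, 0, q²]]. -/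
open Matrix

/-!
Take `K₀ = diag(√(1 - q²), 1, 0)`, `K₂ = q |2⟩⟨0|`, `K₋₂ = |0⟩⟨2|` and all other `Kₙ = 0`.
`K₀` keeps the coherence between the levels `0` and `1` while removing the fraction `q²` of the
population of level `0`, which `K₂` lifts to level `2`; `K₋₂` returns the whole population of
level `2`. Since `q²` is also the Gibbs ratio `γ₂ / γ₀`, these two transfers balance on the Gibbs
state.
-/

theorem Complex.ofReal_sqrt_mul_self_s11 {x : ℝ} (hx : 0 ≤ x) : (√x : ℂ) * √x = x := by
  exact_mod_cast Real.mul_self_sqrt hx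

namespace Matrix

theorem diagonal_mul_mul_diagonal {n α : Type*} [Fintype n] [DecidableEq n]
    [NonUnitalNonAssocSemiring α] (d e : n → α) (M : Matrix n n α) :
    diagonal d * M * diagonal e = of fun i j => d i * M i j * e j := by
  ext i j
  simp [diagonal_mul, mul_diagonal]

theorem sum_mul_smul_mul_conjTranspose {ι m n α : Type*} [Fintype n] [CommSemiring α]
    [StarRing α] (s : Finset ι) (K : ι → Matrix m n α) (c : α) (A : Matrix n n α) :
    ∑ i ∈ s, K i * (c • A) * (K i)ᴴ = c • ∑ i ∈ s, K i * A * (K i)ᴴ := by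
  simp only [Finset.smul_sum, Matrix.mul_smul, Matrix.smul_mul]

end Matrix

theorem vecMulVec_star_plus :
    vecMulVec ![(1 / √2 : ℂ), 1 / √2, 0] (star ![(1 / √2 : ℂ), 1 / √2, 0]) =
      (1 / 2 : ℂ) • !![1, 1, 0; 1, 1, 0; 0, 0, 0] := by
  have h2 : ((√2 : ℝ) : ℂ)⁻¹ * ((√2 : ℝ) : ℂ)⁻¹ = 2⁻¹ := by
    rw [← mul_inv, Complex.ofReal_sqrt_mul_self_s11 zero_le_two]; norm_num
  ext i j
  fin_cases i <;> fin_cases j <;> simp [vecMulVec_apply, h2]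

noncomputable def extremeKraus (q : ℝ) (n : ℤ) : Matrix (Fin 3) (Fin 3) ℂ :=
  if n = 0 then diagonal ![(√(1 - q ^ 2) : ℂ), 1, 0]
  else if n = 2 then single 2 0 (q : ℂ)
  else if n = -2 then single 0 2 1
  else 0

namespace extremeKraus

theorem apply_of_sub_ne {q : ℝ} {n : ℤ} {i j : Fin 3}
    (h : ((i : ℕ) : ℤ) - ((j : ℕ) : ℤ) ≠ n) : extremeKraus q n i j = 0 := by
  unfold extremeKraus
  split_ifs <;> subst_vars <;> fin_cases i <;> fin_cases j <;> simp_all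

theorem sum_Icc_neg_two_two {M : Type*} [AddCommMonoid M] (q : ℝ)
    (f : Matrix (Fin 3) (Fin 3) ℂ → M) (hf : f 0 = 0) :
    ∑ n ∈ Finset.Icc (-2 : ℤ) 2, f (extremeKraus q n) =
      f (diagonal ![(√(1 - q ^ 2) : ℂ), 1, 0]) + f (single 2 0 (q : ℂ)) + f (single 0 2 1) := by
  rw [show Finset.Icc (-2 : ℤ) 2 = {-2, -1, 0, 1, 2} by decide]
  simp [Finset.sum_insert, extremeKraus, hf]
  abel

theorem sum_conjTranspose_mul_self {q : ℝ} (hq : q ^ 2 ≤ 1) :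
    ∑ n ∈ Finset.Icc (-2 : ℤ) 2, (extremeKraus q n)ᴴ * extremeKraus q n = 1 := by
  rw [sum_Icc_neg_two_two q (fun K => Kᴴ * K) (by simp)]
  simp only [diagonal_conjTranspose, conjTranspose_single, diagonal_mul_diagonal,
    single_mul_single_same]
  ext i j
  fin_cases i <;> fin_cases j <;>
    simp [one_apply, Complex.ofReal_sqrt_mul_self_s11 (sub_nonneg.2 hq), ← sq]

theorem sum_mul_diagonal_mul_conjTranspose {q : ℝ} (hq : q ^ 2 ≤ 1) :
    ∑ n ∈ Finset.Icc (-2 : ℤ) 2,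
        extremeKraus q n * diagonal ![1, (q : ℂ), (q : ℂ) ^ 2] * (extremeKraus q n)ᴴ =
      diagonal ![1, (q : ℂ), (q : ℂ) ^ 2] := by
  rw [sum_Icc_neg_two_two q (fun K => K * diagonal ![1, (q : ℂ), (q : ℂ) ^ 2] * Kᴴ) (by simp)]
  simp only [diagonal_conjTranspose, conjTranspose_single, diagonal_mul_diagonal,
    single_mul_mul_single]
  ext i j
  fin_cases i <;> fin_cases j <;>
    simp [Complex.ofReal_sqrt_mul_self_s11 (sub_nonneg.2 hq), ← sq]

theorem sum_mul_plus_mul_conjTranspose {q : ℝ} (hq : q ^ 2 ≤ 1) :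
    ∑ n ∈ Finset.Icc (-2 : ℤ) 2,
        extremeKraus q n * !![1, 1, 0; 1, 1, 0; 0, 0, 0] * (extremeKraus q n)ᴴ =
      !![((1 - q ^ 2 : ℝ) : ℂ), ((√(1 - q ^ 2) : ℝ) : ℂ), 0;
         ((√(1 - q ^ 2) : ℝ) : ℂ), 1, 0;
         0, 0, ((q ^ 2 : ℝ) : ℂ)] := by
  rw [sum_Icc_neg_two_two q (fun K => K * !![1, 1, 0; 1, 1, 0; 0, 0, 0] * Kᴴ) (by simp)]
  simp only [diagonal_conjTranspose, conjTranspose_single, diagonal_mul_mul_diagonal,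
    single_mul_mul_single]
  ext i j
  fin_cases i <;> fin_cases j <;>
    simp [Complex.ofReal_sqrt_mul_self_s11 (sub_nonneg.2 hq), ← sq]

end extremeKraus

/-- There is a time-translation covariant, trace-preserving, Gibbs-preserving
family of Kraus operators (an enhanced thermal operation) mapping
`ρ₀ = |ψ₀⟩⟨ψ₀|`, `ψ₀ = (e₀+e₁)/√2`, to the state `ρ` with populations
`((1−q²)/2, 1/2, q²/2)` and coherence `ρ₁₀ = (1/2)√(1−q²)`. -/
theorem exists_ento_reaching_extreme_state
    (q : ℝ) (hq : q ∈ Set.Ioo (0 : ℝ) 1) :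
    ∃ K : ℤ → Matrix (Fin 3) (Fin 3) ℂ,
      (∀ n ∈ Finset.Icc (-2 : ℤ) 2, ∀ i j : Fin 3,
        ((i : ℕ) : ℤ) - ((j : ℕ) : ℤ) ≠ n → K n i j = 0) ∧
      (∑ n ∈ Finset.Icc (-2 : ℤ) 2, (K n)ᴴ * K n = 1) ∧
      (∑ n ∈ Finset.Icc (-2 : ℤ) 2,
          K n * ((1 + q + q ^ 2 : ℂ)⁻¹ •
            Matrix.diagonal ![1, (q : ℂ), (q : ℂ) ^ 2]) * (K n)ᴴ
        = (1 + q + q ^ 2 : ℂ)⁻¹ • Matrix.diagonal ![1, (q : ℂ), (q : ℂ) ^ 2]) ∧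
      (∑ n ∈ Finset.Icc (-2 : ℤ) 2,
          K n * (Matrix.vecMulVec
            ![(1 / Real.sqrt 2 : ℂ), (1 / Real.sqrt 2 : ℂ), 0]
            (star ![(1 / Real.sqrt 2 : ℂ), (1 / Real.sqrt 2 : ℂ), 0])) * (K n)ᴴ
        = (1 / 2 : ℂ) •
            !![((1 - q ^ 2 : ℝ) : ℂ), ((Real.sqrt (1 - q ^ 2) : ℝ) : ℂ), 0;
               ((Real.sqrt (1 - q ^ 2) : ℝ) : ℂ), 1, 0;
               0, 0, ((q ^ 2 : ℝ) : ℂ)]) := by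
  have hq2 : q ^ 2 ≤ 1 := pow_le_one₀ hq.1.le hq.2.le
  refine ⟨extremeKraus q, fun _ _ _ _ => extremeKraus.apply_of_sub_ne,
    extremeKraus.sum_conjTranspose_mul_self hq2, ?_, ?_⟩
  · rw [sum_mul_smul_mul_conjTranspose, extremeKraus.sum_mul_diagonal_mul_conjTranspose hq2]
  · rw [vecMulVec_star_plus, sum_mul_smul_mul_conjTranspose,
      extremeKraus.sum_mul_plus_mul_conjTranspose hq2]
end

section
/- Let a, m be natural numbers and let U be a unitary complex matrix of size (a+m)×(a+m) whose top-left a×a block is a diagonal matrix M with nonnegative real diagonal entries. Then at least a − m of the diagonal entries of M are equal to 1, i.e., the cardinality of {s ∈ {0,…,a−1} : M_{ss} = 1} is at least a − m. -/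
/-!
Write `U = [[D, B], [C, E]]` with `D = diagonal d`. The top-left block of `U * Uᴴ = 1` gives
`B * Bᴴ = diagonal (1 - d²)`. The rank of the left side is at most the number `m` of columns of
`B`, and the rank of the right side is the number of `i` with `d i ≠ 1`, since `d i ≥ 0`.
-/

open Matrix

namespace Matrix

variable {𝕜 ι κ : Type*} [RCLike 𝕜] [Fintype ι] [Fintype κ]

theorem toBlocks₁₁_mul_conjTranspose_self (U : Matrix (ι ⊕ κ) (ι ⊕ κ) 𝕜) :
    (U * Uᴴ).toBlocks₁₁ = U.toBlocks₁₁ * U.toBlocks₁₁ᴴ + U.toBlocks₁₂ * U.toBlocks₁₂ᴴ := by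
  conv_lhs => rw [← fromBlocks_toBlocks U, fromBlocks_conjTranspose, fromBlocks_multiply]
  rfl

theorem card_ne_one_le_of_toBlocks₁₁_eq_diagonal [DecidableEq ι] [DecidableEq κ]
    {U : Matrix (ι ⊕ κ) (ι ⊕ κ) 𝕜} (hU : U * Uᴴ = 1) {d : ι → ℝ} (hd : ∀ i, 0 ≤ d i)
    (hblock : U.toBlocks₁₁ = diagonal fun i => (d i : 𝕜)) :
    Fintype.card {i // d i ≠ 1} ≤ Fintype.card κ := by
  classical
  have hB : U.toBlocks₁₂ * U.toBlocks₁₂ᴴ = diagonal fun i => ((1 - d i ^ 2 : ℝ) : 𝕜) := by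
    have h := toBlocks₁₁_mul_conjTranspose_self U
    rw [hU, hblock, diagonal_conjTranspose, diagonal_mul_diagonal] at h
    rw [eq_sub_of_add_eq' h.symm, ← diagonal_one, toBlocks₁₁_diagonal, diagonal_sub]
    congr 1
    funext i
    simp [sq]
  have hcard :
      Fintype.card {i // d i ≠ 1} = Fintype.card {i // ((1 - d i ^ 2 : ℝ) : 𝕜) ≠ 0} := by
    refine Fintype.card_congr (Equiv.subtypeEquivRight fun i => ?_)
    rw [Ne, Ne, RCLike.ofReal_eq_zero, sub_eq_zero, eq_comm (a := (1 : ℝ)),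
      pow_eq_one_iff_of_nonneg (hd i) two_ne_zero]
  calc Fintype.card {i // d i ≠ 1}
      = (U.toBlocks₁₂ * U.toBlocks₁₂ᴴ).rank := by rw [hB, rank_diagonal, hcard]
    _ ≤ U.toBlocks₁₂.rank := rank_mul_le_left _ _
    _ ≤ Fintype.card κ := rank_le_card_width _

end Matrix

/-- **Appendix D counting argument**: if the top-left `a×a` block of a unitary
matrix of size `(a+m)×(a+m)` is diagonal with nonnegative real entries, then at
least `a − m` of these diagonal entries equal `1`. -/
theorem unitary_diagonal_block_many_ones
    (a m : ℕ)
    (U : Matrix (Fin (a + m)) (Fin (a + m)) ℂ)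
    (hU : U ∈ Matrix.unitaryGroup (Fin (a + m)) ℂ)
    (M : Fin a → ℝ) (hMnn : ∀ s, 0 ≤ M s)
    (hblock : ∀ s s' : Fin a,
      U (Fin.castAdd m s) (Fin.castAdd m s') = if s = s' then (M s : ℂ) else 0) :
    a - m ≤ Nat.card {s : Fin a // M s = 1} := by
  set V := U.submatrix finSumFinEquiv finSumFinEquiv
  have hV : V * Vᴴ = 1 := by
    rw [conjTranspose_submatrix, submatrix_mul_equiv, ← star_eq_conjTranspose,
      mem_unitaryGroup_iff.mp hU, submatrix_one_equiv]
  have hV₁₁ : V.toBlocks₁₁ = diagonal fun s => (M s : ℂ) := by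
    ext s s'
    simp [V, toBlocks₁₁, hblock, diagonal_apply]
  have hcard := card_ne_one_le_of_toBlocks₁₁_eq_diagonal hV hMnn hV₁₁
  rw [Fintype.card_subtype_compl, Fintype.card_fin, Fintype.card_fin] at hcard
  rw [Nat.card_eq_fintype_card]
  omega
end
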